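/- Merge-operator correctness: Let A and B be distinct attributes, let I and J be finite sets of values, let {E_a}_{a∈I} be relations over a schema S_E and {F_b}_{b∈J} relations over a schema S_F, where {A}, {B}, S_E, S_F are pairwise disjoint. Then the selection σ_{A=B} applied to the relation denoted by (⋃_{a∈I} ⟨A:a⟩ × E_a) × (⋃_{b∈J} ⟨B:b⟩ × F_b) equals the relation denoted by ⋃_{c ∈ I∩J} ⟨A:c⟩ × ⟨B:c⟩ × E_c × F_c. -/

import Mathlib

/-! Distributing the product over both unions splits the selection into blocks
`(⟨A:a⟩ × E_a) × (⟨B:b⟩ × F_b)`. Every tuple of such a block has `t A = a` and `t B = b`,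
so `σ_{A=B}` keeps the block whole when `a = b` and empties it otherwise. Since no tuple of
`E_c` is defined at `B`, the factor `⟨B:c⟩` commutes past `E_c`, which gives the stated form. -/

/-! ## Tuples and relations -/

/-- Attributes. -/
abbrev Att : Type := ℕ
/-- Values (a countable domain). -/
abbrev Val : Type := ℕ

/-- A tuple is a partial map from attributes to values; it is a tuple over a
schema `S` if it is defined exactly on the attributes of `S`. -/
abbrev Tuple : Type := Att → Option Val

namespace Tuple

/-- `t` is a tuple over the schema `S`. -/
def isOver (t : Tuple) (S : Finset Att) : Prop := ∀ a, (t a).isSome ↔ a ∈ S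

/-- Restriction of a tuple to a set of attributes. -/
def restrict (t : Tuple) (P : Finset Att) : Tuple :=
  fun a => if a ∈ P then t a else none

/-- Combination of two tuples (used for products/joins over disjoint schemas). -/
def join (t₁ t₂ : Tuple) : Tuple :=
  fun a => match t₁ a with
    | some v => some v
    | none => t₂ a

end Tuple

/-- The nullary tuple `⟨⟩`. -/
def emptyTuple : Tuple := fun _ => none

/-- The tuple of the singleton relation `⟨A : a⟩`. -/
def singleTuple (A : Att) (a : Val) : Tuple := fun b => if b = A then some a else none

/-- Projection `π_P` of a relation. -/
def projRel (P : Finset Att) (R : Set Tuple) : Set Tuple := (fun t => t.restrict P) '' R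

/-- Product of two relations (over disjoint schemas). -/
def prodRel (R₁ R₂ : Set Tuple) : Set Tuple := Set.image2 Tuple.join R₁ R₂

/-- `R` is a (finite) relation over schema `S`. -/
def IsRelOver (R : Set Tuple) (S : Finset Att) : Prop := R.Finite ∧ ∀ t ∈ R, t.isOver S

/-! ## F-representations -/

/-- Factorised representations: expressions built from the empty relation,
the nullary tuple, singletons, unions and products. -/
inductive FRep : Type where
  | empty (S : Finset Att) : FRep
  | nullary : FRep
  | single (A : Att) (a : Val) : FRep
  | union (E₁ E₂ : FRep) : FRep
  | prod (E₁ E₂ : FRep) : FRep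

namespace FRep

/-- The schema of an f-representation. -/
def schema : FRep → Finset Att
  | empty S => S
  | nullary => ∅
  | single A _ => {A}
  | union E₁ _ => E₁.schema
  | prod E₁ E₂ => E₁.schema ∪ E₂.schema

/-- Well-formedness: unions are over a common schema, products over disjoint schemas. -/
def WF : FRep → Prop
  | empty _ => True
  | nullary => True
  | single _ _ => True
  | union E₁ E₂ => E₁.WF ∧ E₂.WF ∧ E₁.schema = E₂.schema
  | prod E₁ E₂ => E₁.WF ∧ E₂.WF ∧ Disjoint E₁.schema E₂.schema

/-- The relation `⟦E⟧` denoted by an f-representation `E`. -/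
def denote : FRep → Set Tuple
  | empty _ => ∅
  | nullary => {emptyTuple}
  | single A a => {singleTuple A a}
  | union E₁ E₂ => E₁.denote ∪ E₂.denote
  | prod E₁ E₂ => prodRel E₁.denote E₂.denote

/-- The size `|E|`: the number of singletons in `E`. -/
def size : FRep → ℕ
  | empty _ => 0
  | nullary => 0
  | single _ _ => 1
  | union E₁ E₂ => E₁.size + E₂.size
  | prod E₁ E₂ => E₁.size + E₂.size

/-- Number of `A`-singletons occurring in `E`. -/
def countAtt (A : Att) : FRep → ℕ
  | empty _ => 0
  | nullary => 0
  | single B _ => if B = A then 1 else 0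
  | union E₁ E₂ => countAtt A E₁ + countAtt A E₂
  | prod E₁ E₂ => countAtt A E₁ + countAtt A E₂

end FRep

/-! ## F-trees -/

/-- An f-tree: a rooted tree whose nodes are labelled by sets of attributes.
A forest (`List FTree`) of such trees is an f-tree in the sense of the paper. -/
inductive FTree : Type where
  | node (label : Finset Att) (children : List FTree) : FTree

/-- An f-tree over a schema is an unordered rooted forest. -/
abbrev Forest := List FTree

def FTree.label : FTree → Finset Att
  | .node l _ => l

def FTree.children : FTree → List FTree
  | .node _ cs => cs

/-- The list of node labels of a tree. -/
def FTree.nodes : FTree → List (Finset Att)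
  | .node l cs => l :: (cs.attach.map (fun c => FTree.nodes c.1)).flatten
decreasing_by
  have := List.sizeOf_lt_of_mem c.2
  simp only [FTree.node.sizeOf_spec]
  omega

/-- The list of node labels of a forest. -/
def forestNodes (F : Forest) : List (Finset Att) := (F.map FTree.nodes).flatten

/-- All attributes appearing in a tree. -/
def FTree.attrs (t : FTree) : Finset Att := t.nodes.foldr (· ∪ ·) ∅

/-- The root-to-leaf paths of a tree, as lists of labels. -/
def FTree.paths : FTree → List (List (Finset Att))
  | .node l cs =>
    match (cs.attach.map (fun c => FTree.paths c.1)).flatten with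
    | [] => [[l]]
    | ps => ps.map (l :: ·)
decreasing_by
  have := List.sizeOf_lt_of_mem c.2
  simp only [FTree.node.sizeOf_spec]
  omega

/-- The root-to-leaf paths of a forest. -/
def forestPaths (F : Forest) : List (List (Finset Att)) := (F.map FTree.paths).flatten

/-- `F` is an f-tree over the schema `S`: labels are nonempty, pairwise disjoint,
and cover exactly `S`. -/
def IsFTreeOver (S : Finset Att) (F : Forest) : Prop :=
  (∀ l ∈ forestNodes F, l.Nonempty) ∧
  (forestNodes F).Pairwise (fun l₁ l₂ => Disjoint l₁ l₂) ∧
  (∀ a : Att, a ∈ S ↔ ∃ l ∈ forestNodes F, a ∈ l)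

/-! ## F-representations over f-trees -/

mutual
  /-- `OverForest E F`: `E` is an f-representation over the forest `F`
  (a product of f-representations over the trees of `F`; over the empty forest
  it is `∅` or `⟨⟩`). -/
  inductive OverForest : FRep → Forest → Prop where
    | empty : OverForest (.empty ∅) []
    | nullary : OverForest .nullary []
    | one {E : FRep} {t : FTree} : OverTree E t → OverForest E [t]
    | cons {E F : FRep} {t : FTree} {ts : Forest} :
        OverTree E t → OverForest F ts → ts ≠ [] → OverForest (.prod E F) (t :: ts)

  /-- `OverTree E t`: `E` is an f-representation over the tree `t`. -/
  inductive OverTree : FRep → FTree → Prop where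
    | mk {E : FRep} {l : Finset Att} {cs : List FTree} {vs : Set Val} :
        OverUnion E l cs vs → OverTree E (.node l cs)

  /-- `OverUnion E l cs vs`: `E` is a union, over the distinct values in `vs`,
  of groups `⟨A₁:a⟩ × ⋯ × ⟨A_k:a⟩ × E_a` for the node labelled `l` with child
  forest `cs`. -/
  inductive OverUnion : FRep → Finset Att → List FTree → Set Val → Prop where
    | empty {l : Finset Att} {cs : List FTree} :
        OverUnion (.empty ((FTree.node l cs).attrs)) l cs ∅
    | group {E : FRep} {l : Finset Att} {cs : List FTree} {a : Val} :
        OverGroup E l cs a → OverUnion E l cs {a}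
    | union {E₁ E₂ : FRep} {l : Finset Att} {cs : List FTree} {vs₁ vs₂ : Set Val} :
        OverUnion E₁ l cs vs₁ → OverUnion E₂ l cs vs₂ → Disjoint vs₁ vs₂ →
        OverUnion (.union E₁ E₂) l cs (vs₁ ∪ vs₂)

  /-- `OverGroup E l cs a`: `E` is `⟨A₁:a⟩ × ⋯ × ⟨A_k:a⟩ × E_a` where
  `{A₁,…,A_k} = l` and `E_a` is over the child forest `cs` (omitted when `cs` is empty). -/
  inductive OverGroup : FRep → Finset Att → List FTree → Val → Prop where
    | leaf {E : FRep} {l : Finset Att} {a : Val} :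
        SingProd E l a → OverGroup E l [] a
    | inner {E F : FRep} {l : Finset Att} {cs : List FTree} {a : Val} :
        SingProd E l a → OverForest F cs → cs ≠ [] → OverGroup (.prod E F) l cs a

  /-- `SingProd E l a`: `E` is the product of singletons `⟨A:a⟩` for the attributes `A ∈ l`. -/
  inductive SingProd : FRep → Finset Att → Val → Prop where
    | single {A : Att} {a : Val} : SingProd (.single A a) {A} a
    | prod {E₁ E₂ : FRep} {l₁ l₂ : Finset Att} {a : Val} :
        SingProd E₁ l₁ a → SingProd E₂ l₂ a → Disjoint l₁ l₂ →
        SingProd (.prod E₁ E₂) (l₁ ∪ l₂) a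
end

/-- `R` admits an f-representation over the f-tree (forest) `F`. -/
def HasFRepOver (R : Set Tuple) (F : Forest) : Prop :=
  ∃ E : FRep, OverForest E F ∧ E.denote = R

/-! ## Queries -/

/-- A select-project-join query `Q = π_P σ_φ (R₁ × ⋯ × R_n)`:
`n` relation symbols with given schemas, a conjunction `eqs` of attribute
equalities, and a projection list `proj`. -/
structure Query where
  n : ℕ
  schemas : Fin n → Finset Att
  eqs : List (Att × Att)
  proj : Finset Att

namespace Query

/-- All attributes of the query. -/
def atts (Q : Query) : Finset Att := Finset.univ.biUnion Q.schemas

/-- Well-formedness: relation schemas are pairwise disjoint, and the projection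
list and equalities mention only attributes of the query. -/
def WF (Q : Query) : Prop :=
  (∀ i j : Fin Q.n, i ≠ j → Disjoint (Q.schemas i) (Q.schemas j)) ∧
  Q.proj ⊆ Q.atts ∧ ∀ p ∈ Q.eqs, p.1 ∈ Q.atts ∧ p.2 ∈ Q.atts

/-- A database for `Q` assigns a finite relation of the right schema to each
relation symbol. -/
def IsDB (Q : Query) (D : Fin Q.n → Set Tuple) : Prop :=
  ∀ i, (D i).Finite ∧ ∀ t ∈ D i, t.isOver (Q.schemas i)

/-- The query result `Q(D)`. -/
def result (Q : Query) (D : Fin Q.n → Set Tuple) : Set Tuple :=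
  { t | ∃ f : Tuple, f.isOver Q.atts ∧ (∀ i, f.restrict (Q.schemas i) ∈ D i) ∧
      (∀ p ∈ Q.eqs, f p.1 = f p.2) ∧ t = f.restrict Q.proj }

/-- Attributes transitively equal under the equalities of `φ`. -/
def equivAtt (Q : Query) : Att → Att → Prop :=
  Relation.EqvGen (fun a b => (a, b) ∈ Q.eqs ∨ (b, a) ∈ Q.eqs)

open scoped Classical in
/-- The equivalence class of an attribute. -/
noncomputable def cls (Q : Query) (a : Att) : Finset Att :=
  Q.atts.filter (fun b => Q.equivAtt a b)

/-- `F` is an f-tree of the query `Q`: its nodes are labelled exactly by the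
equivalence classes of the attributes in the projection list, one node per class. -/
def IsFTreeOf (Q : Query) (F : Forest) : Prop :=
  (forestNodes F).Nodup ∧
  ∀ l : Finset Att, l ∈ forestNodes F ↔ ∃ a ∈ Q.proj, l = Q.cls a

/-- The path constraint: for each relation of `Q`, all nodes labelled by classes
containing its attributes lie on a single root-to-leaf path. -/
def PathConstraint (Q : Query) (F : Forest) : Prop :=
  ∀ i : Fin Q.n, ∃ p ∈ forestPaths F, ∀ l ∈ forestNodes F,
    (l ∩ Q.schemas i).Nonempty → l ∈ p

/-- A fractional edge cover of the classes on a path `p` by the relations of `Q`. -/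
def IsFracCover (Q : Query) (p : List (Finset Att)) (x : Fin Q.n → ℝ) : Prop :=
  (∀ i, 0 ≤ x i) ∧
  ∀ l ∈ p, 1 ≤ ∑ i, (if (l ∩ Q.schemas i).Nonempty then x i else 0)

/-- The fractional edge cover number `ρ*(p)` of a path `p`. -/
noncomputable def rhoStar (Q : Query) (p : List (Finset Att)) : ℝ :=
  sInf { c : ℝ | ∃ x, Q.IsFracCover p x ∧ c = ∑ i, x i }

/-- The parameter `s(T)`: the maximum of `ρ*(p)` over all root-to-leaf paths of `F`. -/
noncomputable def sParam (Q : Query) (F : Forest) : ℝ :=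
  sSup { r : ℝ | ∃ p ∈ forestPaths F, r = Q.rhoStar p }

/-- The size `|D|` of a database: the total number of tuples. -/
noncomputable def dbSize (Q : Query) (D : Fin Q.n → Set Tuple) : ℕ :=
  ∑ i, (D i).ncard

end Query

namespace Tuple

theorem join_assoc (t₁ t₂ t₃ : Tuple) : join (join t₁ t₂) t₃ = join t₁ (join t₂ t₃) := by
  funext x
  simp only [join]
  cases t₁ x <;> rfl

theorem join_comm_of_disjoint {t₁ t₂ : Tuple} (h : ∀ x, t₁ x = none ∨ t₂ x = none) :
    join t₁ t₂ = join t₂ t₁ := by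
  funext x
  simp only [join]
  rcases h x with h₁ | h₂
  · rw [h₁]; cases t₂ x <;> rfl
  · rw [h₂]; cases t₁ x <;> rfl

theorem join_apply_of_eq_some {t₁ : Tuple} (t₂ : Tuple) {x : Att} {v : Val}
    (h : t₁ x = some v) : join t₁ t₂ x = some v := by
  simp only [join, h]

theorem join_apply_of_eq_none (t₁ t₂ : Tuple) {x : Att} (h : t₁ x = none) :
    join t₁ t₂ x = t₂ x := by
  simp only [join, h]

theorem isOver.apply_eq_none {t : Tuple} {S : Finset Att} (ht : t.isOver S) {x : Att}
    (hx : x ∉ S) : t x = none :=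
  Option.not_isSome_iff_eq_none.mp fun h => hx ((ht x).mp h)

end Tuple

theorem singleTuple_apply_self (A : Att) (a : Val) : singleTuple A a A = some a :=
  if_pos rfl

theorem singleTuple_apply_of_ne {A B : Att} (a : Val) (h : B ≠ A) : singleTuple A a B = none :=
  if_neg h

theorem IsRelOver.apply_eq_none {R : Set Tuple} {S : Finset Att} (hR : IsRelOver R S)
    {t : Tuple} (ht : t ∈ R) {x : Att} (hx : x ∉ S) : t x = none :=
  (hR.2 t ht).apply_eq_none hx

theorem prodRel_assoc (R₁ R₂ R₃ : Set Tuple) :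
    prodRel (prodRel R₁ R₂) R₃ = prodRel R₁ (prodRel R₂ R₃) :=
  Set.image2_assoc Tuple.join_assoc

section prodRel

variable {R₁ R₂ R₃ R₄ : Set Tuple} {x : Att}

theorem prodRel_comm_of_disjoint
    (h : ∀ t₁ ∈ R₁, ∀ t₂ ∈ R₂, ∀ x, t₁ x = none ∨ t₂ x = none) :
    prodRel R₁ R₂ = prodRel R₂ R₁ := by
  rw [prodRel, Set.image2_swap]
  exact Set.image2_congr fun t₂ h₂ t₁ h₁ => Tuple.join_comm_of_disjoint (h t₁ h₁ t₂ h₂)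

theorem prodRel_prodRel_prodRel_comm
    (h : ∀ t₂ ∈ R₂, ∀ t₃ ∈ R₃, ∀ x, t₂ x = none ∨ t₃ x = none) :
    prodRel (prodRel R₁ R₂) (prodRel R₃ R₄) = prodRel (prodRel R₁ R₃) (prodRel R₂ R₄) := by
  rw [prodRel_assoc, ← prodRel_assoc R₂, prodRel_comm_of_disjoint h, prodRel_assoc,
    ← prodRel_assoc]

theorem prodRel_iUnion₂_left {ι : Sort*} {κ : ι → Sort*} (R : ∀ i, κ i → Set Tuple)
    (R' : Set Tuple) : prodRel (⋃ i, ⋃ j, R i j) R' = ⋃ i, ⋃ j, prodRel (R i j) R' :=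
  Set.image2_iUnion₂_left _ R R'

theorem prodRel_iUnion₂_right {ι : Sort*} {κ : ι → Sort*} (R : Set Tuple)
    (R' : ∀ i, κ i → Set Tuple) : prodRel R (⋃ i, ⋃ j, R' i j) = ⋃ i, ⋃ j, prodRel R (R' i j) :=
  Set.image2_iUnion₂_right _ R R'

theorem apply_eq_of_mem_prodRel_left {v : Val} (h₁ : ∀ t₁ ∈ R₁, t₁ x = some v) {t : Tuple}
    (ht : t ∈ prodRel R₁ R₂) : t x = some v := by
  obtain ⟨t₁, ht₁, t₂, -, rfl⟩ := ht
  exact Tuple.join_apply_of_eq_some t₂ (h₁ t₁ ht₁)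

theorem apply_eq_of_mem_prodRel_right {v : Option Val} (h₁ : ∀ t₁ ∈ R₁, t₁ x = none)
    (h₂ : ∀ t₂ ∈ R₂, t₂ x = v) {t : Tuple} (ht : t ∈ prodRel R₁ R₂) : t x = v := by
  obtain ⟨t₁, ht₁, t₂, ht₂, rfl⟩ := ht
  rw [Tuple.join_apply_of_eq_none t₁ t₂ (h₁ t₁ ht₁), h₂ t₂ ht₂]

theorem apply_eq_of_mem_prodRel_singleton {A : Att} {a : Val} {t : Tuple}
    (ht : t ∈ prodRel {singleTuple A a} R₁) : t A = some a :=
  apply_eq_of_mem_prodRel_left (by simp [singleTuple_apply_self]) ht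

end prodRel

theorem apply_eq_of_mem_prodRel_singleton_prodRel_singleton {A B : Att} (hAB : A ≠ B)
    {a b : Val} {E F : Set Tuple} (hE : ∀ e ∈ E, e B = none) {t : Tuple}
    (ht : t ∈ prodRel (prodRel {singleTuple A a} E) (prodRel {singleTuple B b} F)) :
    t A = some a ∧ t B = some b := by
  refine ⟨apply_eq_of_mem_prodRel_left (fun _ => apply_eq_of_mem_prodRel_singleton) ht, ?_⟩
  refine apply_eq_of_mem_prodRel_right (fun t₁ ht₁ => ?_)
    (fun _ => apply_eq_of_mem_prodRel_singleton) ht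
  refine apply_eq_of_mem_prodRel_right ?_ hE ht₁
  simp [singleTuple_apply_of_ne a hAB.symm]

theorem prodRel_singleton_prodRel_singleton_comm {A B : Att} {a b : Val}
    {E F : Set Tuple} (hE : ∀ e ∈ E, e B = none) :
    prodRel (prodRel {singleTuple A a} E) (prodRel {singleTuple B b} F)
      = prodRel {singleTuple A a} (prodRel {singleTuple B b} (prodRel E F)) := by
  rw [prodRel_prodRel_prodRel_comm, prodRel_assoc]
  rintro e he _ rfl x
  by_cases hx : x = B
  · exact .inl (hx ▸ hE e he)
  · exact .inr (singleTuple_apply_of_ne b hx)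

/-- **merge-operator correctness.** The selection `σ_{A=B}` of
`(⋃_{a∈I} ⟨A:a⟩ × E_a) × (⋃_{b∈J} ⟨B:b⟩ × F_b)` equals
`⋃_{c∈I∩J} ⟨A:c⟩ × ⟨B:c⟩ × E_c × F_c`. -/
theorem merge_correct (A B : Att) (hAB : A ≠ B) (I J : Finset Val)
    (SE SF : Finset Att) (E F : Val → Set Tuple)
    (hASE : A ∉ SE) (hASF : A ∉ SF) (hBSE : B ∉ SE) (hBSF : B ∉ SF)
    (hSEF : Disjoint SE SF)
    (hE : ∀ a ∈ I, IsRelOver (E a) SE) (hF : ∀ b ∈ J, IsRelOver (F b) SF) :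
    {t ∈ prodRel (⋃ a ∈ I, prodRel {singleTuple A a} (E a))
                 (⋃ b ∈ J, prodRel {singleTuple B b} (F b)) | t A = t B}
      = ⋃ c ∈ (I ∩ J : Finset Val),
          prodRel {singleTuple A c}
            (prodRel {singleTuple B c} (prodRel (E c) (F c))) := by
  have hEB : ∀ a ∈ I, ∀ e ∈ E a, e B = none := fun a ha e he => (hE a ha).apply_eq_none he hBSE
  rw [prodRel_iUnion₂_left]
  simp only [prodRel_iUnion₂_right]
  ext t
  simp only [Set.mem_iUnion, Finset.mem_inter, exists_prop]
  constructor
  · rintro ⟨⟨a, ha, b, hb, ht⟩, htAB⟩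
    obtain ⟨htA, htB⟩ := apply_eq_of_mem_prodRel_singleton_prodRel_singleton hAB (hEB a ha) ht
    obtain rfl : a = b := Option.some_injective _ (htA.symm.trans (htAB.trans htB))
    exact ⟨a, ⟨ha, hb⟩, prodRel_singleton_prodRel_singleton_comm (hEB a ha) ▸ ht⟩
  · rintro ⟨c, ⟨hcI, hcJ⟩, ht⟩
    rw [← prodRel_singleton_prodRel_singleton_comm (hEB c hcI)] at ht
    obtain ⟨htA, htB⟩ := apply_eq_of_mem_prodRel_singleton_prodRel_singleton hAB (hEB c hcI) ht
    exact ⟨⟨c, hcI, c, hcJ, ht⟩, htA.trans htB.symm⟩
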